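/- Let X ⊆ Σ^ℤ be a subshift and φ̃ : X̃ → X a topological conjugacy with coding windows [-L̃, L̃] for φ̃ and [-L, L] for φ̃⁻¹, given by a one-block map Φ̃ : Σ̃ → Σ (so L̃ = 0). Define Φ̂ on (2L+1)-blocks of X̃ by Φ̂(x̃_{[-L,L]}) = Φ̃(x̃₀). Then Φ̂⁻¹(Σ_synchro(X)) ⊆ Σ_synchro(X̃^{⟨[-L,L]⟩}): every (2L+1)-block of X̃ whose central symbol maps to a synchronizing symbol of X is a synchronizing symbol of the higher block system X̃^{⟨[-L,L]⟩}. -/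

import Mathlib

/-!
The central symbol of `[v]` pins down, through `Φ`, a synchronizing symbol of `X`. Given
admissible `u v` and `v w` in the higher block system, realise them by points `x₁, x₂` of `Xt`
that carry `v` at the same coordinate `m`, so they agree on `[m - L, m + L]`. Their images
under `Φ` share the synchronizing symbol at `m`, hence can be spliced there into a point `y`
of `X`. Because the inverse conjugacy `G` has window `[-L, L]` and the two images agree on
`[m - L, m + L]`, the point `G y` agrees with `x₁` left of `m` and with `x₂` right of `m`,
windows included, so its higher block code reads `u v w`.
-/

/-- The shift on `Σ^ℤ`: `(x_i)_{i∈ℤ} ↦ (x_{i+1})_{i∈ℤ}`. -/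
def shift {A : Type*} (x : ℤ → A) : ℤ → A := fun i => x (i + 1)

/-- The word `x_{[a,b]}` carried by the block of `x` on the interval `[a, b]`. -/
def block {A : Type*} (x : ℤ → A) (a b : ℤ) : List A :=
  (List.range (b + 1 - a).toNat).map fun k => x (a + k)

/-- A word is admissible for `X` if it appears in a point of `X`. -/
def Admissible {A : Type*} (X : Set (ℤ → A)) (w : List A) : Prop :=
  ∃ x ∈ X, ∃ n : ℤ, ∀ (k : ℕ) (h : k < w.length), x (n + k) = w.get ⟨k, h⟩

/-- A word `v` is synchronizing for `X` if it is admissible and whenever `uv` and `vw`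
are admissible, so is `uvw`. -/
def IsSyncWord {A : Type*} (X : Set (ℤ → A)) (v : List A) : Prop :=
  Admissible X v ∧ ∀ u w : List A, Admissible X (u ++ v) → Admissible X (v ++ w) →
    Admissible X (u ++ v ++ w)

/-- A subshift: a nonempty, closed, shift-invariant subset of `Σ^ℤ`. -/
def IsSubshift {A : Type*} [TopologicalSpace A] (X : Set (ℤ → A)) : Prop :=
  X.Nonempty ∧ IsClosed X ∧ shift '' X = X

/-- Topological transitivity of a subshift, expressed on its language: any two admissible
words can be joined by an admissible transition word. -/
def LangTransitive {A : Type*} (X : Set (ℤ → A)) : Prop :=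
  ∀ u v : List A, Admissible X u → Admissible X v → ∃ w, Admissible X (u ++ w ++ v)

/-- A synchronizing subshift: topologically transitive with a synchronizing word. -/
def SyncSubshift {A : Type*} (X : Set (ℤ → A)) : Prop :=
  LangTransitive X ∧ ∃ v : List A, IsSyncWord X v

/-- A strongly synchronizing subshift: synchronizing symbols appear uniformly close
(within distance `Q`) to synchronizing words. -/
def StronglySync {A : Type*} (X : Set (ℤ → A)) : Prop :=
  SyncSubshift X ∧ ∃ Q : ℕ, ∀ x ∈ X, ∀ I₁ I₂ : ℤ, I₁ ≤ I₂ →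
    IsSyncWord X (block x I₁ I₂) →
    ∃ i : ℤ, I₁ - Q ≤ i ∧ i ≤ I₂ + Q ∧ IsSyncWord X [x i]

/-- The higher block system `X^{⟨[a,b]⟩}` of `X`, over the alphabet of words. -/
def higherBlock {A : Type*} (X : Set (ℤ → A)) (a b : ℤ) : Set (ℤ → List A) :=
  { y | ∃ x ∈ X, ∀ i : ℤ, y i = block x (i + a) (i + b) }

open Set

section

variable {A B : Type*}

theorem block_eq_map_range (x : ℤ → A) (a b : ℤ) :
    block x a b = (List.range (b + 1 - a).toNat).map fun k : ℕ => x (a + k) := by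
  simp [block, ← List.map_eq_flatMap]

@[simp]
theorem length_block (x : ℤ → A) (a b : ℤ) : (block x a b).length = (b + 1 - a).toNat := by
  simp [block_eq_map_range]

@[simp]
theorem getElem_block (x : ℤ → A) (a b : ℤ) (k : ℕ) (hk : k < (block x a b).length) :
    (block x a b)[k] = x (a + k) := by
  simp [block_eq_map_range]

theorem block_comp_add (x : ℤ → A) (a b d : ℤ) :
    block (fun j => x (j + d)) a b = block x (a + d) (b + d) := by
  simp only [block_eq_map_range, show b + d + 1 - (a + d) = b + 1 - a by ring, add_right_comm]

def OccursAt (x : ℤ → A) (n : ℤ) (w : List A) : Prop :=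
  ∀ (k : ℕ) (h : k < w.length), x (n + k) = w[k]

theorem admissible_iff {X : Set (ℤ → A)} {w : List A} :
    Admissible X w ↔ ∃ x ∈ X, ∃ n, OccursAt x n w :=
  Iff.rfl

section OccursAt

variable {x y : ℤ → A} {n : ℤ} {u v w : List A}

@[simp]
theorem occursAt_singleton {s : A} : OccursAt x n [s] ↔ x n = s := by
  simp [OccursAt]

theorem occursAt_append :
    OccursAt x n (u ++ v) ↔ OccursAt x n u ∧ OccursAt x (n + u.length) v := by
  refine ⟨fun h => ⟨fun k hk => ?_, fun k hk => ?_⟩, fun ⟨hu, hv⟩ k hk => ?_⟩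
  · exact (h k (by simp only [List.length_append]; omega)).trans (List.getElem_append_left hk)
  · have h' := h (u.length + k) (by simp only [List.length_append]; omega)
    rw [List.getElem_append_right (by omega)] at h'
    simpa [add_assoc] using h'
  · rcases lt_or_ge k u.length with hku | hku
    · rw [List.getElem_append_left hku]
      exact hu k hku
    · simp only [List.length_append] at hk
      rw [List.getElem_append_right hku, ← hv (k - u.length) (by omega)]
      congr 1
      omega

theorem occursAt_append_append :
    OccursAt x n (u ++ v ++ w) ↔ OccursAt x n (u ++ v) ∧ OccursAt x (n + u.length) (v ++ w) := by
  simp only [occursAt_append, List.length_append, Nat.cast_add, add_assoc]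
  tauto

theorem occursAt_comp_add {d : ℤ} :
    OccursAt (fun j => x (j + d)) n w ↔ OccursAt x (n + d) w := by
  simp only [OccursAt, add_right_comm]

theorem occursAt_block (x : ℤ → A) (a b : ℤ) : OccursAt x a (block x a b) := by
  intro k hk
  rw [getElem_block]

theorem OccursAt.eqOn (hx : OccursAt x n w) (hy : OccursAt y n w) :
    EqOn x y (Icc n (n + w.length - 1)) := by
  intro j hj
  have hk : (j - n).toNat < w.length := by have := hj.1; have := hj.2; omega
  have hj' : n + ((j - n).toNat : ℤ) = j := by have := hj.1; omega
  rw [← hj', hx _ hk, hy _ hk]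

end OccursAt

theorem block_eq_block_iff {x y : ℤ → A} {a b : ℤ} :
    block x a b = block y a b ↔ EqOn x y (Icc a b) := by
  refine ⟨fun h j hj => ?_, fun h => ?_⟩
  · refine (occursAt_block x a b).eqOn (h ▸ occursAt_block y a b) ⟨hj.1, ?_⟩
    have := hj.2
    simp only [length_block]
    omega
  · rw [block_eq_map_range, block_eq_map_range]
    refine List.map_congr_left fun k hk => h ⟨?_, ?_⟩ <;>
      simp only [List.mem_range] at hk <;> omega

theorem shift_injective : Function.Injective (shift : (ℤ → A) → ℤ → A) := fun x y h =>
  funext fun j => by simpa [shift] using congrFun h (j - 1)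

section ShiftInvariant

variable {X : Set (ℤ → A)} (hX : shift '' X = X)
include hX

theorem shift_mem_iff {x : ℤ → A} : shift x ∈ X ↔ x ∈ X := by
  conv_lhs => rw [← hX]
  exact shift_injective.mem_set_image

theorem comp_add_mem {x : ℤ → A} (hx : x ∈ X) (d : ℤ) : (fun j => x (j + d)) ∈ X := by
  induction d using Int.induction_on with
  | zero => simpa using hx
  | succ k ih =>
    convert (shift_mem_iff hX).2 ih using 1
    funext j
    simp only [shift]
    ring_nf
  | pred k ih =>
    refine (shift_mem_iff hX).1 ?_
    convert ih using 1
    funext j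
    simp only [shift]
    ring_nf

theorem Admissible.exists_occursAt {w : List A} (h : Admissible X w) (n : ℤ) :
    ∃ x ∈ X, OccursAt x n w := by
  obtain ⟨x, hx, m, hm⟩ := h
  exact ⟨_, comp_add_mem hX hx (m - n), occursAt_comp_add.2 (by rwa [add_sub_cancel])⟩

theorem IsSyncWord.exists_splice {x₁ x₂ : ℤ → A} (hx₁ : x₁ ∈ X) (hx₂ : x₂ ∈ X) {m : ℤ}
    (hm : x₁ m = x₂ m) (hs : IsSyncWord X [x₁ m]) {a b : ℤ} (ha : a ≤ m) (hb : m ≤ b) :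
    ∃ y ∈ X, EqOn y x₁ (Icc a m) ∧ EqOn y x₂ (Icc m b) := by
  set u := block x₁ a (m - 1)
  set w := block x₂ (m + 1) b
  have hu : a + (u.length : ℤ) = m := by simp only [u, length_block]; omega
  have hw : (w.length : ℤ) = b - m := by simp only [w, length_block]; omega
  have h₁ : OccursAt x₁ a (u ++ [x₁ m]) :=
    occursAt_append.2 ⟨occursAt_block x₁ a (m - 1), by simp [hu]⟩
  have h₂ : OccursAt x₂ m ([x₁ m] ++ w) :=
    occursAt_append.2 ⟨by simp [hm], by simpa using occursAt_block x₂ (m + 1) b⟩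
  obtain ⟨y, hy, hocc⟩ := (hs.2 _ _ ⟨x₁, hx₁, a, h₁⟩ ⟨x₂, hx₂, m, h₂⟩).exists_occursAt hX a
  rw [occursAt_append_append, hu] at hocc
  refine ⟨y, hy, ?_, ?_⟩
  · convert hocc.1.eqOn h₁ using 2
    simp only [List.length_append, List.length_singleton, Nat.cast_add, Nat.cast_one]
    omega
  · convert hocc.2.eqOn h₂ using 2
    simp only [List.length_append, List.length_singleton, Nat.cast_add, Nat.cast_one]
    omega

end ShiftInvariant

section Splice

variable {α : Type*} {f g h : ℤ → α} {c m d r : ℤ}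

theorem Set.EqOn.extend_Icc_right (hg : EqOn f g (Icc c m)) (hh : EqOn f h (Icc m d))
    (hgh : EqOn g h (Icc (m - r) (m + r))) (hrd : m + r ≤ d) : EqOn f g (Icc c (m + r)) := by
  intro j ⟨hcj, hjr⟩
  rcases le_or_gt j m with hjm | hmj
  · exact hg ⟨hcj, hjm⟩
  · exact (hh ⟨hmj.le, by omega⟩).trans (hgh ⟨by omega, hjr⟩).symm

theorem Set.EqOn.extend_Icc_left (hg : EqOn f g (Icc c m)) (hh : EqOn f h (Icc m d))
    (hgh : EqOn g h (Icc (m - r) (m + r))) (hcr : c ≤ m - r) : EqOn f h (Icc (m - r) d) := by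
  intro j ⟨hrj, hjd⟩
  rcases le_or_gt j m with hjm | hmj
  · exact (hg ⟨by omega, hjm⟩).trans (hgh ⟨hrj, by omega⟩)
  · exact hh ⟨hmj.le, hjd⟩

end Splice

def higherBlockMap (a b : ℤ) (x : ℤ → A) (i : ℤ) : List A := block x (i + a) (i + b)

theorem higherBlock_eq_image (X : Set (ℤ → A)) (a b : ℤ) :
    higherBlock X a b = higherBlockMap a b '' X := by
  ext y
  simp [higherBlock, higherBlockMap, funext_iff, eq_comm]

theorem higherBlockMap_comp_add (a b d : ℤ) (x : ℤ → A) :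
    higherBlockMap a b (fun j => x (j + d)) = fun i => higherBlockMap a b x (i + d) := by
  funext i
  simp only [higherBlockMap, block_comp_add, add_right_comm]

theorem higherBlockMap_apply_eq_iff {a b n : ℤ} {x y : ℤ → A} :
    higherBlockMap a b x n = higherBlockMap a b y n ↔ EqOn x y (Icc (n + a) (n + b)) :=
  block_eq_block_iff

theorem apply_eq_of_higherBlockMap_eq {a b m n : ℤ} {x y : ℤ → A} (ha : a ≤ 0) (hb : 0 ≤ b)
    (h : higherBlockMap a b x m = higherBlockMap a b y n) : x m = y n := by
  rw [show higherBlockMap a b y n = higherBlockMap a b (fun j => y (j + (n - m))) m by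
    simp [higherBlockMap_comp_add], higherBlockMap_apply_eq_iff] at h
  simpa using h (show m ∈ Icc (m + a) (m + b) from ⟨by omega, by omega⟩)

theorem shift_image_higherBlock {X : Set (ℤ → A)} (hX : shift '' X = X) (a b : ℤ) :
    shift '' higherBlock X a b = higherBlock X a b := by
  have hcomm :
      (shift ∘ higherBlockMap a b : (ℤ → A) → ℤ → List A) = higherBlockMap a b ∘ shift :=
    funext fun x => (higherBlockMap_comp_add a b 1 x).symm
  rw [higherBlock_eq_image, image_image, ← Function.comp_def, hcomm, image_comp, hX]

theorem OccursAt.higherBlockMap_congr {x y : ℤ → A} {a b n : ℤ} {w : List (List A)}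
    (h : OccursAt (higherBlockMap a b x) n w)
    (hxy : EqOn x y (Icc (n + a) (n + w.length - 1 + b))) :
    OccursAt (higherBlockMap a b y) n w := fun k hk =>
  (higherBlockMap_apply_eq_iff.2 fun j ⟨hj₁, hj₂⟩ => (hxy ⟨by omega, by omega⟩).symm).trans (h k hk)

theorem exists_splice_of_isSyncWord_map {X : Set (ℤ → A)} {Xt : Set (ℤ → B)} {Φ : B → A}
    {G : (ℤ → A) → (ℤ → B)} {L : ℤ} (hX : shift '' X = X)
    (hF : ∀ x ∈ Xt, (fun i => Φ (x i)) ∈ X) (hG : ∀ y ∈ X, G y ∈ Xt)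
    (hGF : ∀ x ∈ Xt, G (fun i => Φ (x i)) = x) (hL : 0 ≤ L)
    (hGwin : ∀ y ∈ X, ∀ y' ∈ X, ∀ i, EqOn y y' (Icc (i - L) (i + L)) → G y i = G y' i)
    {x₁ x₂ : ℤ → B} (hx₁ : x₁ ∈ Xt) (hx₂ : x₂ ∈ Xt) {m : ℤ}
    (h₁₂ : EqOn x₁ x₂ (Icc (m - L) (m + L))) (hs : IsSyncWord X [Φ (x₁ m)]) {a b : ℤ}
    (ha : a ≤ m) (hb : m ≤ b) :
    ∃ x ∈ Xt, EqOn x x₁ (Icc a m) ∧ EqOn x x₂ (Icc m b) := by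
  have hΦ : EqOn (fun i => Φ (x₁ i)) (fun i => Φ (x₂ i)) (Icc (m - L) (m + L)) :=
    fun j hj => congrArg Φ (h₁₂ hj)
  obtain ⟨y, hy, hy₁, hy₂⟩ := hs.exists_splice hX (hF x₁ hx₁) (hF x₂ hx₂)
    (hΦ ⟨by omega, by omega⟩) (a := a - L) (b := b + L) (by omega) (by omega)
  have hwindow : ∀ {x : ℤ → B} {c d : ℤ}, x ∈ Xt →
      EqOn y (fun i => Φ (x i)) (Icc (c - L) (d + L)) → EqOn (G y) x (Icc c d) :=
    fun {x c d} hx hyx p ⟨hcp, hpd⟩ =>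
      (hGwin y hy _ (hF x hx) p fun j ⟨hj₁, hj₂⟩ => hyx ⟨by omega, by omega⟩).trans
        (congrFun (hGF x hx) p)
  exact ⟨G y, hG y hy, hwindow hx₁ (hy₁.extend_Icc_right hy₂ hΦ (by omega)),
    hwindow hx₂ (hy₁.extend_Icc_left hy₂ hΦ (by omega))⟩

end

theorem stmt18_general {A B : Type*}
    [TopologicalSpace A] [TopologicalSpace B]
    (X : Set (ℤ → A)) (Xt : Set (ℤ → B)) (hX : IsSubshift X) (hXt : IsSubshift Xt)
    (Φ : B → A) (G : (ℤ → A) → (ℤ → B))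
    (hF : ∀ x ∈ Xt, (fun i => Φ (x i)) ∈ X)
    (hG : ∀ y ∈ X, G y ∈ Xt)
    (hGF : ∀ x ∈ Xt, G (fun i => Φ (x i)) = x)
    (L : ℤ) (hL : 0 ≤ L)
    (hGwin : ∀ y ∈ X, ∀ y' ∈ X, ∀ i : ℤ,
      (∀ j : ℤ, i - L ≤ j → j ≤ i + L → y j = y' j) → G y i = G y' i)
    (xt : ℤ → B) (hxt : xt ∈ Xt) (i : ℤ)
    (hsync : IsSyncWord X [Φ (xt i)]) :
    IsSyncWord (higherBlock Xt (-L) L) [block xt (i - L) (i + L)] := by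
  have hshift := shift_image_higherBlock hXt.2.2 (-L) L
  rw [higherBlock_eq_image] at hshift ⊢
  rw [show block xt (i - L) (i + L) = higherBlockMap (-L) L xt i by
    simp only [higherBlockMap, sub_eq_add_neg]]
  refine ⟨⟨_, mem_image_of_mem _ hxt, i, by simp⟩, fun u w h₁ h₂ => ?_⟩
  obtain ⟨_, ⟨x₁, hx₁, rfl⟩, n, hocc₁⟩ := admissible_iff.1 h₁
  set m := n + (u.length : ℤ)
  obtain ⟨_, ⟨x₂, hx₂, rfl⟩, hocc₂⟩ := h₂.exists_occursAt hshift m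
  have hv₁ : higherBlockMap (-L) L x₁ m = higherBlockMap (-L) L xt i :=
    occursAt_singleton.1 (occursAt_append.1 hocc₁).2
  have hv₂ : higherBlockMap (-L) L x₂ m = higherBlockMap (-L) L xt i :=
    occursAt_singleton.1 (occursAt_append.1 hocc₂).1
  have h₁₂ : EqOn x₁ x₂ (Icc (m - L) (m + L)) := by
    simpa [sub_eq_add_neg] using higherBlockMap_apply_eq_iff.1 (hv₁.trans hv₂.symm)
  have hs : IsSyncWord X [Φ (x₁ m)] := by
    rwa [apply_eq_of_higherBlockMap_eq (by omega) hL hv₁]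
  obtain ⟨x, hx, e₁, e₂⟩ := exists_splice_of_isSyncWord_map hX.2.2 hF hG hGF hL
    (fun y hy y' hy' p h => hGwin y hy y' hy' p fun j hj₁ hj₂ => h ⟨hj₁, hj₂⟩) hx₁ hx₂ h₁₂ hs
    (a := n - L) (b := m + w.length + L) (by omega) (by omega)
  refine ⟨_, mem_image_of_mem _ hx, n, occursAt_append_append.2 ⟨?_, ?_⟩⟩
  · refine hocc₁.higherBlockMap_congr fun j ⟨hj₁, hj₂⟩ =>
      (e₁.extend_Icc_right e₂ h₁₂ (by omega) ⟨by omega, ?_⟩).symm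
    simp only [List.length_append, List.length_singleton, Nat.cast_add, Nat.cast_one] at hj₂
    omega
  · refine hocc₂.higherBlockMap_congr fun j ⟨hj₁, hj₂⟩ =>
      (e₁.extend_Icc_left e₂ h₁₂ (by omega) ⟨by omega, ?_⟩).symm
    simp only [List.length_append, List.length_singleton, Nat.cast_add, Nat.cast_one] at hj₂
    omega

/-- Lemma 2.2: for a one-block conjugacy `φ̃ : X̃ → X` given by `Φ̃ : Σ̃ → Σ` whose inverse
has coding window `[-L, L]`, every `(2L+1)`-block of `X̃` whose central symbol maps to a
synchronizing symbol of `X` is a synchronizing symbol of the higher block system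
`X̃^{⟨[-L, L]⟩}`. -/
theorem stmt18 {A B : Type*} [Fintype A] [Fintype B]
    [TopologicalSpace A] [DiscreteTopology A] [TopologicalSpace B] [DiscreteTopology B]
    (X : Set (ℤ → A)) (Xt : Set (ℤ → B)) (hX : IsSubshift X) (hXt : IsSubshift Xt)
    (Φ : B → A) (G : (ℤ → A) → (ℤ → B))
    (hF : ∀ x ∈ Xt, (fun i => Φ (x i)) ∈ X)
    (hG : ∀ y ∈ X, G y ∈ Xt)
    (hGF : ∀ x ∈ Xt, G (fun i => Φ (x i)) = x)
    (hFG : ∀ y ∈ X, (fun i => Φ (G y i)) = y)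
    (L : ℤ) (hL : 0 ≤ L)
    (hGwin : ∀ y ∈ X, ∀ y' ∈ X, ∀ i : ℤ,
      (∀ j : ℤ, i - L ≤ j → j ≤ i + L → y j = y' j) → G y i = G y' i)
    (xt : ℤ → B) (hxt : xt ∈ Xt) (i : ℤ)
    (hsync : IsSyncWord X [Φ (xt i)]) :
    IsSyncWord (higherBlock Xt (-L) L) [block xt (i - L) (i + L)] :=
  stmt18_general X Xt hX hXt Φ G hF hG hGF L hL hGwin xt hxt i hsync
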